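/- Let ρ ∈ 𝒮(ℝ). Then the Fourier transform (in the tempered distribution sense) of the function s ↦ (ρ(s) − ρ(0))/(i s) is the function r ↦ 2π ρ(0) 𝟙_{r ≥ 0} − ∫_{−∞}^r \hat{ρ}(σ) dσ, where \hat{ρ}(ξ) = ∫_ℝ e^{−i s ξ} ρ(s) ds. -/

import Mathlib

/-!
Since `(ρ s - ρ 0) / (i s) = i⁻¹ ∫₀¹ ρ'(t s) dt`, the pairing with `φ̂` is an average over
`t ∈ (0, 1]` of `∫ ρ'(t s) φ̂(s) ds`. By the multiplication formula `∫ f ĝ = ∫ f̂ g` and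
`(ρ'(t ·))^(r) = t⁻¹ (i r / t) ρ̂(r / t)`, each of these equals `i ∫ (r / t²) ρ̂(r / t) φ(r) dr`.
After exchanging the `t`- and `r`-integrals, the substitution `σ = r / t` maps `(0, 1]` onto
`[r, ∞)` if `r > 0` and onto `(-∞, r]` if `r < 0`, so the inner integral is
`∫_r^∞ ρ̂ = 2π ρ(0) - ∫_{-∞}^r ρ̂`, resp. `-∫_{-∞}^r ρ̂`, because `∫ ρ̂ = 2π ρ(0)`.
Both exchanges are justified by the bounds `‖ρ'‖_∞ ‖φ̂‖_1` and `‖φ‖_∞ ∫ |σ ρ̂(σ)| dσ`.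
-/

open MeasureTheory Complex Real
open scoped ENNReal

noncomputable section

/-- Fourier transform with the convention `ĥ(ξ) = ∫ e^{−i s ξ} h(s) ds`. -/
def fhat (h : ℝ → ℂ) (ξ : ℝ) : ℂ :=
  ∫ s : ℝ, Complex.exp (-(Complex.I * s * ξ)) * h s

open scoped FourierTransform SchwartzMap
open Set Filter

theorem fhat_eq_fourier (h : ℝ → ℂ) (ξ : ℝ) : fhat h ξ = 𝓕 h (ξ / (2 * π)) := by
  rw [fhat, Real.fourier_real_eq_integral_exp_smul]
  congr 1 with s
  rw [smul_eq_mul]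
  congr 2
  push_cast
  field_simp

theorem fhat_eq_fourierIntegral (h : ℝ → ℂ) :
    fhat h = VectorFourier.fourierIntegral 𝐞 volume ((2 * π)⁻¹ • LinearMap.mul ℝ ℝ) h := by
  ext ξ
  rw [fhat, VectorFourier.fourierIntegral]
  congr 1 with s
  rw [Circle.smul_def, Real.fourierChar_apply, smul_eq_mul]
  congr 2
  simp only [LinearMap.smul_apply, LinearMap.mul_apply', smul_eq_mul]
  push_cast
  field_simp

theorem integral_mul_fhat_eq_integral_fhat_mul {f g : ℝ → ℂ} (hf : Integrable f)
    (hg : Integrable g) : ∫ s, f s * fhat g s = ∫ r, fhat f r * g r := by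
  have hflip := VectorFourier.integral_fourierIntegral_smul_eq_flip (μ := volume) (ν := volume)
    (L := (2 * π)⁻¹ • LinearMap.mul ℝ ℝ) Real.continuous_fourierChar (by fun_prop) hf hg
  have hL : ((2 * π)⁻¹ • LinearMap.mul ℝ ℝ).flip = (2 * π)⁻¹ • LinearMap.mul ℝ ℝ := by
    ext; simp [mul_comm]
  simp only [hL, smul_eq_mul, ← fhat_eq_fourierIntegral] at hflip
  exact hflip.symm

theorem fhat_comp_mul_left (h : ℝ → ℂ) {t : ℝ} (ht : 0 < t) (ξ : ℝ) :
    fhat (fun s => h (t * s)) ξ = (t : ℂ)⁻¹ * fhat h (ξ / t) := by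
  have ht' : (t : ℂ) ≠ 0 := by exact_mod_cast ht.ne'
  have hrescale : ∀ s : ℝ, cexp (-(I * s * ξ)) * h (t * s)
      = (fun u : ℝ => cexp (-(I * u * (ξ / t))) * h u) (t * s) := by
    intro s
    push_cast
    field_simp
  unfold fhat
  simp_rw [hrescale]
  rw [Measure.integral_comp_mul_left (fun u : ℝ => cexp (-(I * u * (ξ / t))) * h u) t,
    abs_of_pos (inv_pos.mpr ht), real_smul]
  push_cast
  rfl

theorem fhat_deriv {f : ℝ → ℂ} (hf : Integrable f) (hdf : Differentiable ℝ f)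
    (hf' : Integrable (deriv f)) (ξ : ℝ) : fhat (deriv f) ξ = I * ξ * fhat f ξ := by
  rw [fhat_eq_fourier, fhat_eq_fourier, Real.fourier_deriv hf hdf hf']
  simp only [smul_eq_mul]
  push_cast
  field_simp

theorem integral_fhat {f : ℝ → ℂ} (hf : Integrable f) (hcf : Continuous f)
    (hFf : Integrable (𝓕 f)) : ∫ ξ, fhat f ξ = 2 * π * f 0 := by
  simp_rw [fhat_eq_fourier]
  rw [Measure.integral_comp_div (fun v => 𝓕 f v), abs_of_pos two_pi_pos,
    ← congrFun (hcf.fourierInv_fourier_eq hf hFf) 0]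
  simp [Real.fourierInv_eq]

theorem integral_deriv_comp_mul_mul_fhat {f g : ℝ → ℂ} (hf : Integrable f)
    (hdf : Differentiable ℝ f) (hf' : Integrable (deriv f)) (hg : Integrable g) {t : ℝ}
    (ht : 0 < t) :
    ∫ s, deriv f (t * s) * fhat g s = I * ∫ r, (r / t ^ 2) • fhat f (r / t) * g r := by
  rw [integral_mul_fhat_eq_integral_fhat_mul (hf'.comp_mul_left' ht.ne') hg, ← integral_const_mul]
  congr 1 with r
  have ht' : (t : ℂ) ≠ 0 := by exact_mod_cast ht.ne'
  rw [fhat_comp_mul_left (deriv f) ht, fhat_deriv hf hdf hf', real_smul]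
  push_cast
  field_simp

-- With `r / 0 = 0`, the map `σ ↦ r / σ` is an involution of all of `ℝ`.
theorem image_const_div_Ioc_zero_one_of_pos {r : ℝ} (hr : 0 < r) :
    (r / ·) '' Ioc 0 1 = Ici r := by
  rw [image_eq_preimage_of_inverse (fun _ => div_div_cancel₀ hr.ne')
    (fun _ => div_div_cancel₀ hr.ne')]
  ext σ
  simp only [mem_preimage, mem_Ioc, mem_Ici, div_pos_iff_of_pos_left hr]
  exact ⟨fun h => (div_le_one h.1).1 h.2,
    fun h => ⟨hr.trans_le h, (div_le_one (hr.trans_le h)).2 h⟩⟩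

theorem image_const_div_Ioc_zero_one_of_neg {r : ℝ} (hr : r < 0) :
    (r / ·) '' Ioc 0 1 = Iic r := by
  rw [image_eq_preimage_of_inverse (fun _ => div_div_cancel₀ hr.ne)
    (fun _ => div_div_cancel₀ hr.ne)]
  ext σ
  have hpos : 0 < r / σ ↔ σ < 0 := by
    rw [div_pos_iff]
    constructor
    · rintro (h | h) <;> linarith [h.1, h.2]
    · exact fun h => Or.inr ⟨hr, h⟩
  simp only [mem_preimage, mem_Ioc, mem_Iic, hpos]
  exact ⟨fun h => (div_le_one_of_neg h.1).1 h.2,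
    fun h => ⟨h.trans_lt hr, (div_le_one_of_neg (h.trans_lt hr)).2 h⟩⟩

section

variable {E : Type*} [NormedAddCommGroup E] [NormedSpace ℝ E]

theorem smul_setIntegral_Ioc_deriv_comp_mul [CompleteSpace E] {f : ℝ → E} (hf : ContDiff ℝ 1 f)
    (s : ℝ) :
    s • ∫ t in Ioc (0 : ℝ) 1, deriv f (t * s) = f s - f 0 := by
  have hderiv : ∀ t ∈ uIcc (0 : ℝ) 1,
      HasDerivAt (fun t => f (t * s)) (s • deriv f (t * s)) t := fun t _ =>
    ((hf.differentiable one_ne_zero).differentiableAt.hasDerivAt).scomp t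
      ((hasDerivAt_id t).mul_const s |>.congr_deriv (one_mul s))
  have hint : IntervalIntegrable (fun t => s • deriv f (t * s)) volume 0 1 :=
    ((hf.continuous_deriv le_rfl).comp (continuous_mul_const s)).const_smul s
      |>.intervalIntegrable 0 1
  rw [← intervalIntegral.integral_of_le zero_le_one, ← intervalIntegral.integral_smul,
    intervalIntegral.integral_eq_sub_of_hasDerivAt hderiv hint]
  simp

theorem setIntegral_image_const_div_Ioc_zero_one (g : ℝ → E) {r : ℝ} (hr : r ≠ 0) :
    ∫ σ in (r / ·) '' Ioc 0 1, g σ = ∫ t in Ioc (0 : ℝ) 1, |r / t ^ 2| • g (r / t) := by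
  have hderiv : ∀ t ∈ Ioc (0 : ℝ) 1, HasDerivWithinAt (r / ·) (-(r / t ^ 2)) (Ioc 0 1) t :=
    fun t ht => by
      simpa [div_eq_mul_inv] using ((hasDerivAt_inv ht.1.ne').const_mul r).hasDerivWithinAt
  have hinj : InjOn (r / ·) (Ioc (0 : ℝ) 1) := fun a _ b _ h => by
    simpa using (div_div_cancel₀ hr).symm.trans ((congrArg (r / ·) h).trans (div_div_cancel₀ hr))
  simpa only [abs_neg] using
    integral_image_eq_integral_abs_deriv_smul measurableSet_Ioc hderiv hinj g

theorem setIntegral_Ioc_div_sq_smul_comp_div [CompleteSpace E] {g : ℝ → E} (hg : Integrable g)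
    {r : ℝ} (hr : r ≠ 0) :
    ∫ t in Ioc (0 : ℝ) 1, (r / t ^ 2) • g (r / t)
      = (if 0 ≤ r then ∫ σ, g σ else 0) - ∫ σ in Iic r, g σ := by
  have habs := setIntegral_image_const_div_Ioc_zero_one g hr
  rcases hr.lt_or_gt with hneg | hpos
  · rw [image_const_div_Ioc_zero_one_of_neg hneg] at habs
    have : ∀ t ∈ Ioc (0 : ℝ) 1, |r / t ^ 2| • g (r / t) = -((r / t ^ 2) • g (r / t)) :=
      fun t ht => by
        rw [abs_of_neg (div_neg_of_neg_of_pos hneg (pow_pos ht.1 2)), neg_smul]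
    rw [setIntegral_congr_fun measurableSet_Ioc this, integral_neg] at habs
    rw [if_neg hneg.not_ge, habs, zero_sub, neg_neg]
  · rw [image_const_div_Ioc_zero_one_of_pos hpos] at habs
    have : ∀ t ∈ Ioc (0 : ℝ) 1, |r / t ^ 2| • g (r / t) = (r / t ^ 2) • g (r / t) := fun t ht => by
      rw [abs_of_pos (div_pos hpos (pow_pos ht.1 2))]
    rw [setIntegral_congr_fun measurableSet_Ioc this] at habs
    rw [if_pos hpos.le, ← habs, integral_Ici_eq_integral_Ioi,
      ← intervalIntegral.integral_Iic_add_Ioi hg.integrableOn hg.integrableOn, add_sub_cancel_left]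

theorem integrable_div_sq_smul_comp_div {g : ℝ → E} (hg : Integrable fun σ => σ • g σ)
    {t : ℝ} (ht : 0 < t) : Integrable fun r => (r / t ^ 2) • g (r / t) := by
  refine ((hg.comp_div ht.ne').smul t⁻¹).congr (Eventually.of_forall fun r => ?_)
  simp only [Pi.smul_apply, smul_smul]
  congr 1
  field_simp

theorem integral_norm_div_sq_smul_comp_div (g : ℝ → E) {t : ℝ} (ht : 0 < t) :
    ∫ r, ‖(r / t ^ 2) • g (r / t)‖ = ∫ σ, ‖σ • g σ‖ := by
  have hscale : ∀ r, ‖(r / t ^ 2) • g (r / t)‖ = t⁻¹ * ‖(r / t) • g (r / t)‖ := fun r => by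
    rw [norm_smul, norm_smul, ← mul_assoc, Real.norm_eq_abs, Real.norm_eq_abs, abs_div, abs_div,
      abs_of_pos ht, abs_of_pos (pow_pos ht 2)]
    field_simp
  simp_rw [hscale]
  rw [integral_const_mul, Measure.integral_comp_div (fun σ => ‖σ • g σ‖), smul_eq_mul,
    abs_of_pos ht, inv_mul_cancel_left₀ ht.ne']

end

theorem integrable_prod_comp_mul_mul {F G : ℝ → ℂ} {C : ℝ} (hF : Continuous F)
    (hFC : ∀ x, ‖F x‖ ≤ C) (hG : Integrable G) (μ : Measure ℝ) [IsFiniteMeasure μ] :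
    Integrable (Function.uncurry fun s t => F (t * s) * G s) (volume.prod μ) :=
  (hG.comp_fst μ).bdd_mul (hF.comp (continuous_snd.mul continuous_fst)).aestronglyMeasurable
    (Eventually.of_forall fun _ => hFC _)

theorem integrable_prod_div_sq_smul_comp_div_mul {G φ : ℝ → ℂ} {C : ℝ} (hG : Continuous G)
    (hσG : Integrable fun σ => σ • G σ) (hφ : Continuous φ) (hφC : ∀ x, ‖φ x‖ ≤ C) :
    Integrable (Function.uncurry fun t r => (r / t ^ 2) • G (r / t) * φ r)
      ((volume.restrict (Ioc 0 1)).prod volume) := by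
  have hmeas : AEStronglyMeasurable (Function.uncurry fun t r => (r / t ^ 2) • G (r / t) * φ r)
      ((volume.restrict (Ioc 0 1)).prod volume) := by
    rw [← Measure.restrict_univ (μ := volume), Measure.prod_restrict]
    refine ContinuousOn.aestronglyMeasurable ?_ (measurableSet_Ioc.prod MeasurableSet.univ)
    have hne : ∀ p ∈ Ioc (0 : ℝ) 1 ×ˢ (univ : Set ℝ), p.1 ≠ 0 := fun p hp => hp.1.1.ne'
    exact ((continuous_snd.continuousOn.div (continuous_fst.pow 2).continuousOn
      fun p hp => pow_ne_zero 2 (hne p hp)).smul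
      (hG.comp_continuousOn (continuous_snd.continuousOn.div continuous_fst.continuousOn hne))).mul
      (hφ.comp continuous_snd).continuousOn
  rw [integrable_prod_iff hmeas]
  constructor
  · refine (ae_restrict_iff' measurableSet_Ioc).2 (Eventually.of_forall fun t ht => ?_)
    exact (integrable_div_sq_smul_comp_div hσG ht.1).mul_bdd hφ.aestronglyMeasurable
      (Eventually.of_forall hφC)
  · refine (integrable_const (C * ∫ σ, ‖σ • G σ‖)).mono' hmeas.norm.integral_prod_right' ?_
    refine (ae_restrict_iff' measurableSet_Ioc).2 (Eventually.of_forall fun t ht => ?_)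
    rw [Real.norm_of_nonneg (integral_nonneg fun _ => norm_nonneg _),
      ← integral_norm_div_sq_smul_comp_div G ht.1, ← integral_const_mul]
    refine integral_mono_of_nonneg (Eventually.of_forall fun _ => norm_nonneg _)
      ((integrable_div_sq_smul_comp_div hσG ht.1).norm.const_mul C)
      (Eventually.of_forall fun r => ?_)
    simp only [Function.uncurry_apply_pair, norm_mul, mul_comm C]
    exact mul_le_mul_of_nonneg_left (hφC r) (norm_nonneg _)

namespace SchwartzMap

variable (f : 𝓢(ℝ, ℂ))

theorem fhat_eq : fhat f = fun ξ => 𝓕 f (ξ / (2 * π)) :=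
  funext (fhat_eq_fourier f)

theorem continuous_fhat : Continuous (fhat f) := by
  rw [fhat_eq]
  exact (𝓕 f).continuous.comp (continuous_id.div_const _)

theorem integrable_fhat : Integrable (fhat f) := by
  rw [fhat_eq]
  exact (𝓕 f).integrable.comp_div two_pi_pos.ne'

theorem coe_derivCLM : ⇑(derivCLM ℝ ℂ f) = deriv f :=
  funext (derivCLM_apply ℝ f)

theorem integrable_deriv : Integrable (deriv f) :=
  f.coe_derivCLM ▸ (derivCLM ℝ ℂ f).integrable

theorem norm_deriv_le_seminorm (x : ℝ) : ‖deriv f x‖ ≤ SchwartzMap.seminorm ℝ 0 1 f := by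
  simpa using le_seminorm' ℝ 0 1 f x

theorem fhat_deriv (ξ : ℝ) : fhat (deriv f) ξ = I * ξ * fhat f ξ :=
  _root_.fhat_deriv f.integrable f.differentiable f.integrable_deriv ξ

theorem integrable_smul_fhat : Integrable fun σ : ℝ => σ • fhat f σ := by
  refine (derivCLM ℝ ℂ f).integrable_fhat.const_mul (-I) |>.congr
    (Eventually.of_forall fun σ => ?_)
  rw [coe_derivCLM]
  dsimp only
  rw [f.fhat_deriv, real_smul, ← mul_assoc, ← mul_assoc, neg_mul, I_mul_I, neg_neg,
    one_mul]

theorem integral_fhat : ∫ ξ, fhat f ξ = 2 * π * f 0 :=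
  _root_.integral_fhat f.integrable f.continuous (𝓕 f).integrable

end SchwartzMap

/-- The Fourier transform, in the sense of tempered distributions
(tested against any Schwartz `φ` by duality), of `s ↦ (ρ(s) − ρ(0))/(i s)` is
`r ↦ 2π ρ(0) 𝟙_{r ≥ 0} − ∫_{−∞}^r ρ̂(σ) dσ`. -/
theorem fourier_of_difference_quotient (ρ : SchwartzMap ℝ ℂ) :
    ∀ φ : SchwartzMap ℝ ℂ,
      (∫ s : ℝ, ((ρ s - ρ 0) / (Complex.I * s)) * fhat (fun u => φ u) s)
        = ∫ r : ℝ, (2 * (π : ℂ) * ρ 0 * (if 0 ≤ r then 1 else 0)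
            - ∫ σ in Set.Iic r, fhat (fun u => ρ u) σ) * φ r := by
  intro φ
  have hq : ∀ᵐ s : ℝ, (ρ s - ρ 0) / (I * s) * fhat φ s
      = I⁻¹ * ∫ t in Ioc (0 : ℝ) 1, deriv ρ (t * s) * fhat φ s := by
    filter_upwards [compl_mem_ae_iff.mpr (measure_singleton 0)] with s hs
    have hs' : (s : ℂ) ≠ 0 := by exact_mod_cast hs
    rw [integral_mul_const, ← smul_setIntegral_Ioc_deriv_comp_mul (ρ.smooth 1) s, real_smul]
    generalize ∫ t in Ioc (0 : ℝ) 1, deriv ρ (t * s) = X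
    field_simp
  have hinner : ∀ᵐ r : ℝ, ∫ t in Ioc (0 : ℝ) 1, (r / t ^ 2) • fhat ρ (r / t) * φ r
      = (2 * π * ρ 0 * (if 0 ≤ r then 1 else 0) - ∫ σ in Iic r, fhat ρ σ) * φ r := by
    filter_upwards [compl_mem_ae_iff.mpr (measure_singleton 0)] with r hr
    rw [integral_mul_const, setIntegral_Ioc_div_sq_smul_comp_div ρ.integrable_fhat hr,
      ρ.integral_fhat]
    split_ifs <;> simp
  calc (∫ s, (ρ s - ρ 0) / (I * s) * fhat φ s)
      = I⁻¹ * ∫ s, ∫ t in Ioc (0 : ℝ) 1, deriv ρ (t * s) * fhat φ s := by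
        rw [integral_congr_ae hq, integral_const_mul]
    _ = I⁻¹ * ∫ t in Ioc (0 : ℝ) 1, ∫ s, deriv ρ (t * s) * fhat φ s := by
        rw [integral_integral_swap (integrable_prod_comp_mul_mul
          ((ρ.smooth 1).continuous_deriv le_rfl) ρ.norm_deriv_le_seminorm φ.integrable_fhat _)]
    _ = ∫ t in Ioc (0 : ℝ) 1, ∫ r, (r / t ^ 2) • fhat ρ (r / t) * φ r := by
        rw [setIntegral_congr_fun measurableSet_Ioc fun t ht =>
          integral_deriv_comp_mul_mul_fhat ρ.integrable ρ.differentiable ρ.integrable_deriv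
            φ.integrable ht.1,
          integral_const_mul, inv_mul_cancel_left₀ I_ne_zero]
    _ = ∫ r, ∫ t in Ioc (0 : ℝ) 1, (r / t ^ 2) • fhat ρ (r / t) * φ r :=
        integral_integral_swap (integrable_prod_div_sq_smul_comp_div_mul ρ.continuous_fhat
          ρ.integrable_smul_fhat φ.continuous (φ.norm_le_seminorm ℝ))
    _ = _ := integral_congr_ae hinner

end
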